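/- arXiv:1706.01291 — 5 statements merged into one kernel-verified Lean document; each statement's English description precedes it below -/
import Mathlib

section
/- Let μ ∈ ℝ, σ > 0, b : ℝ → ℝ a bounded Borel measurable map, x₁, x₂ ∈ ]0,∞[, and x ∈ ℝ. Then ∫_ℝ (1/(σ√x₁)) φ((z − μx₁)/(σ√x₁)) · b(z) · (1/(σ√x₂)) φ((x − z − μx₂)/(σ√x₂)) dz = (1/(σ√(x₁+x₂))) φ((x − μ(x₁+x₂))/(σ√(x₁+x₂))) · ∫_ℝ b((x₁/(x₁+x₂))·x + σ√(x₁x₂/(x₁+x₂))·u) φ(u) du. -/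
open MeasureTheory ProbabilityTheory Filter

noncomputable section

/-- The standard normal density. -/
def phi (u : ℝ) : ℝ := (Real.sqrt (2 * Real.pi))⁻¹ * Real.exp (-u ^ 2 / 2)

lemma change_var (f : ℝ → ℝ) (m d : ℝ) (hd : 0 < d) :
    ∫ u : ℝ, f (m + d * u) = d⁻¹ * ∫ z : ℝ, f z := by
  have h1 : ∀ u : ℝ, m + d * u = d * u + m := fun u => by ring
  simp_rw [h1]
  have h2 := MeasureTheory.Measure.integral_comp_mul_left (fun t => f (t + m)) d
  rw [h2, integral_add_right_eq_self, abs_of_pos (inv_pos.mpr hd), smul_eq_mul]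

open MeasureTheory in
/-- convolution-type identity for two normal densities against a bounded
Borel measurable map. -/
theorem stmt1 (μ σ : ℝ) (hσ : 0 < σ) (b : ℝ → ℝ) (hb : Measurable b)
    (hbd : ∃ C, ∀ z, |b z| ≤ C) (x₁ x₂ : ℝ) (hx₁ : 0 < x₁) (hx₂ : 0 < x₂) (x : ℝ) :
    ∫ z : ℝ, (σ * Real.sqrt x₁)⁻¹ * phi ((z - μ * x₁) / (σ * Real.sqrt x₁)) * b z *
        ((σ * Real.sqrt x₂)⁻¹ * phi ((x - z - μ * x₂) / (σ * Real.sqrt x₂))) =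
      (σ * Real.sqrt (x₁ + x₂))⁻¹ * phi ((x - μ * (x₁ + x₂)) / (σ * Real.sqrt (x₁ + x₂))) *
        ∫ u : ℝ, b (x₁ / (x₁ + x₂) * x + σ * Real.sqrt (x₁ * x₂ / (x₁ + x₂)) * u) * phi u := by
  have hs : 0 < x₁ + x₂ := by linarith
  set s : ℝ := x₁ + x₂ with hs_def
  have hc : 0 < x₁ * x₂ / s := by positivity
  set d : ℝ := σ * Real.sqrt (x₁ * x₂ / s) with hd_def
  have hd : 0 < d := by positivity
  set m : ℝ := x₁ / s * x with hm_def
  set A : ℝ := (σ * Real.sqrt s)⁻¹ * phi ((x - μ * s) / (σ * Real.sqrt s)) with hA_def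
  -- pointwise identity
  have key : ∀ z : ℝ,
      (σ * Real.sqrt x₁)⁻¹ * phi ((z - μ * x₁) / (σ * Real.sqrt x₁)) * b z *
        ((σ * Real.sqrt x₂)⁻¹ * phi ((x - z - μ * x₂) / (σ * Real.sqrt x₂))) =
      A * (b z * (d⁻¹ * phi ((z - m) / d))) := by
    intro z
    have h2π : (0:ℝ) < Real.sqrt (2 * Real.pi) := Real.sqrt_pos.mpr (by positivity)
    have ht₁ : (Real.sqrt x₁) ^ 2 = x₁ := Real.sq_sqrt hx₁.le
    have ht₂ : (Real.sqrt x₂) ^ 2 = x₂ := Real.sq_sqrt hx₂.le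
    have hts : (Real.sqrt s) ^ 2 = s := Real.sq_sqrt hs.le
    have htc : (Real.sqrt (x₁ * x₂ / s)) ^ 2 = x₁ * x₂ / s := Real.sq_sqrt hc.le
    have hsq1 : 0 < Real.sqrt x₁ := Real.sqrt_pos.mpr hx₁
    have hsq2 : 0 < Real.sqrt x₂ := Real.sqrt_pos.mpr hx₂
    have hsqs : 0 < Real.sqrt s := Real.sqrt_pos.mpr hs
    have hsqc : 0 < Real.sqrt (x₁ * x₂ / s) := Real.sqrt_pos.mpr hc
    -- product of normalization constants
    have hconst : Real.sqrt x₁ * Real.sqrt x₂ = Real.sqrt s * Real.sqrt (x₁ * x₂ / s) := by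
      rw [← Real.sqrt_mul hs.le, mul_div_cancel₀ _ hs.ne', ← Real.sqrt_mul hx₁.le]
    -- exponent identity
    have hexp : -((z - μ * x₁) / (σ * Real.sqrt x₁)) ^ 2 / 2 +
        -((x - z - μ * x₂) / (σ * Real.sqrt x₂)) ^ 2 / 2 =
        -((x - μ * s) / (σ * Real.sqrt s)) ^ 2 / 2 + -((z - m) / d) ^ 2 / 2 := by
      rw [hd_def, hm_def]
      rw [div_pow, div_pow, div_pow, div_pow, mul_pow, mul_pow, mul_pow, mul_pow,
        ht₁, ht₂, hts, htc]
      rw [hs_def] at *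
      field_simp
      ring
    have hprod : (σ * Real.sqrt x₁) * (σ * Real.sqrt x₂) = (σ * Real.sqrt s) * d := by
      rw [hd_def]; linear_combination σ ^ 2 * hconst
    have hC : (σ * Real.sqrt x₁)⁻¹ * (σ * Real.sqrt x₂)⁻¹ = (σ * Real.sqrt s)⁻¹ * d⁻¹ := by
      rw [← mul_inv, ← mul_inv, hprod]
    have hE : Real.exp (-((z - μ * x₁) / (σ * Real.sqrt x₁)) ^ 2 / 2) *
        Real.exp (-((x - z - μ * x₂) / (σ * Real.sqrt x₂)) ^ 2 / 2) =
        Real.exp (-((x - μ * s) / (σ * Real.sqrt s)) ^ 2 / 2) *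
        Real.exp (-((z - m) / d) ^ 2 / 2) := by
      rw [← Real.exp_add, ← Real.exp_add, hexp]
    rw [hA_def]
    simp only [phi]
    set E1 := Real.exp (-((z - μ * x₁) / (σ * Real.sqrt x₁)) ^ 2 / 2) with hE1
    set E2 := Real.exp (-((x - z - μ * x₂) / (σ * Real.sqrt x₂)) ^ 2 / 2) with hE2
    set E3 := Real.exp (-((x - μ * s) / (σ * Real.sqrt s)) ^ 2 / 2) with hE3
    set E4 := Real.exp (-((z - m) / d) ^ 2 / 2) with hE4
    set K := (Real.sqrt (2 * Real.pi))⁻¹ with hK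
    linear_combination (K ^ 2 * b z * E1 * E2) * hC +
      (K ^ 2 * b z * (σ * Real.sqrt s)⁻¹ * d⁻¹) * hE
  simp_rw [key]
  rw [integral_const_mul]
  congr 1
  have hcv := change_var (fun z => b z * (d⁻¹ * phi ((z - m) / d))) m d hd
  have h3 : ∀ u : ℝ, b (m + d * u) * (d⁻¹ * phi ((m + d * u - m) / d))
      = d⁻¹ * (b (m + d * u) * phi u) := by
    intro u
    have : (m + d * u - m) / d = u := by
      field_simp
      ring
    rw [this]; ring
  rw [show (∫ z : ℝ, b z * (d⁻¹ * phi ((z - m) / d)))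
      = d * ∫ u : ℝ, b (m + d * u) * (d⁻¹ * phi ((m + d * u - m) / d)) from by
    rw [hcv, ← mul_assoc, mul_inv_cancel₀ hd.ne', one_mul]]
  simp_rw [h3]
  rw [integral_const_mul, ← mul_assoc, mul_inv_cancel₀ hd.ne', one_mul]

end
end

section
/- Let μ ∈ ℝ, σ > 0, b : ℝ → ℝ a bounded Borel measurable map, x₁, x₂ ∈ ]0,∞[, and x ∈ ℝ. Then the normal transform of the one-tuple (b) satisfies 𝒩_{b,μ,σ}(x₁, x₂, x) = ∫_ℝ b((x₁/(x₁+x₂))·x + σ√(x₁x₂/(x₁+x₂))·u) φ(u) du, i.e. it equals E[b((x₁/(x₁+x₂))x + σ√(x₁x₂/(x₁+x₂)) ξ)] for ξ a standard normal random variable. -/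
open MeasureTheory ProbabilityTheory Filter

noncomputable section

/-- The normal transform of a tuple `b = (b₀, …, b_{i-1})` of maps `ℝ → ℝ`. -/
def normalTransform (μ σ : ℝ) (i : ℕ) (b : Fin i → ℝ → ℝ)
    (xs : Fin (i + 1) → ℝ) (x : ℝ) : ℝ :=
  (∫ z : Fin i → ℝ,
      (∏ j : Fin i,
        ((σ * Real.sqrt (xs j.castSucc))⁻¹ *
          phi ((z j - μ * xs j.castSucc) / (σ * Real.sqrt (xs j.castSucc))) *
          b j (∑ k ∈ Finset.Iic j, z k))) *
        ((σ * Real.sqrt (xs (Fin.last i)))⁻¹ *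
          phi ((x - ∑ k, z k - μ * xs (Fin.last i)) / (σ * Real.sqrt (xs (Fin.last i)))))) /
  ((σ * Real.sqrt (∑ k, xs k))⁻¹ *
    phi ((x - μ * ∑ k, xs k) / (σ * Real.sqrt (∑ k, xs k))))


open MeasureTheory in
/-- the normal transform of a one-tuple `(b)`. -/
theorem stmt2 (μ σ : ℝ) (hσ : 0 < σ) (b : ℝ → ℝ) (hb : Measurable b)
    (hbd : ∃ C, ∀ z, |b z| ≤ C) (x₁ x₂ : ℝ) (hx₁ : 0 < x₁) (hx₂ : 0 < x₂) (x : ℝ) :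
    normalTransform μ σ 1 ![b] ![x₁, x₂] x =
      ∫ u : ℝ, b (x₁ / (x₁ + x₂) * x + σ * Real.sqrt (x₁ * x₂ / (x₁ + x₂)) * u) * phi u := by
  have hx12 : (0:ℝ) < x₁ + x₂ := by linarith
  set m : ℝ := x₁ / (x₁ + x₂) * x with hm
  set s : ℝ := σ * Real.sqrt (x₁ * x₂ / (x₁ + x₂)) with hs_def
  have hq : (0:ℝ) < x₁ * x₂ / (x₁ + x₂) := by positivity
  have hs : 0 < s := by positivity
  set K : ℝ := (σ * Real.sqrt (x₁ + x₂))⁻¹ *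
      phi ((x - μ * (x₁ + x₂)) / (σ * Real.sqrt (x₁ + x₂))) with hK_def
  have hK : K ≠ 0 := by
    have : 0 < K := by
      apply mul_pos
      · positivity
      · unfold phi; positivity
    exact this.ne'
  -- pointwise identity
  have key : ∀ z : ℝ,
      (σ * Real.sqrt x₁)⁻¹ * phi ((z - μ * x₁) / (σ * Real.sqrt x₁)) * b z *
        ((σ * Real.sqrt x₂)⁻¹ * phi ((x - z - μ * x₂) / (σ * Real.sqrt x₂))) =
      K * (s⁻¹ * (b z * phi ((z - m) / s))) := by
    intro z
    have sq_div : ∀ (w y : ℝ), 0 < y →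
        ((w / (σ * Real.sqrt y)) ^ 2) = w ^ 2 / (σ ^ 2 * y) := by
      intro w y hy
      rw [div_pow, mul_pow, Real.sq_sqrt hy.le]
    have h1 : Real.sqrt x₁ * Real.sqrt x₂ =
        Real.sqrt (x₁ + x₂) * Real.sqrt (x₁ * x₂ / (x₁ + x₂)) := by
      rw [← Real.sqrt_mul hx₁.le, ← Real.sqrt_mul hx12.le]
      congr 1
      field_simp
    have hconst : (σ * Real.sqrt x₁)⁻¹ * (σ * Real.sqrt x₂)⁻¹ =
        (σ * Real.sqrt (x₁ + x₂))⁻¹ * s⁻¹ := by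
      rw [hs_def, ← mul_inv, ← mul_inv]
      congr 1
      linear_combination σ * σ * h1
    have hexp : Real.exp (-((z - μ * x₁) / (σ * Real.sqrt x₁)) ^ 2 / 2) *
        Real.exp (-((x - z - μ * x₂) / (σ * Real.sqrt x₂)) ^ 2 / 2) =
        Real.exp (-((x - μ * (x₁ + x₂)) / (σ * Real.sqrt (x₁ + x₂))) ^ 2 / 2) *
        Real.exp (-((z - m) / s) ^ 2 / 2) := by
      rw [← Real.exp_add, ← Real.exp_add]
      congr 1
      have hss : ((z - m) / s) ^ 2 = (z - m) ^ 2 / (σ ^ 2 * (x₁ * x₂ / (x₁ + x₂))) := by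
        rw [hs_def, div_pow, mul_pow, Real.sq_sqrt hq.le]
      rw [sq_div _ _ hx₁, sq_div _ _ hx₂, sq_div _ _ hx12, hss, hm]
      have hσ' : σ ≠ 0 := hσ.ne'
      field_simp
      ring
    rw [hK_def]
    simp only [phi]
    calc (σ * Real.sqrt x₁)⁻¹ *
          ((Real.sqrt (2 * Real.pi))⁻¹ *
            Real.exp (-((z - μ * x₁) / (σ * Real.sqrt x₁)) ^ 2 / 2)) * b z *
          ((σ * Real.sqrt x₂)⁻¹ *
            ((Real.sqrt (2 * Real.pi))⁻¹ *
              Real.exp (-((x - z - μ * x₂) / (σ * Real.sqrt x₂)) ^ 2 / 2))) =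
        ((σ * Real.sqrt x₁)⁻¹ * (σ * Real.sqrt x₂)⁻¹) *
          (Real.exp (-((z - μ * x₁) / (σ * Real.sqrt x₁)) ^ 2 / 2) *
            Real.exp (-((x - z - μ * x₂) / (σ * Real.sqrt x₂)) ^ 2 / 2)) *
          ((Real.sqrt (2 * Real.pi))⁻¹ * (Real.sqrt (2 * Real.pi))⁻¹) * b z := by ring
      _ = ((σ * Real.sqrt (x₁ + x₂))⁻¹ * s⁻¹) *
          (Real.exp (-((x - μ * (x₁ + x₂)) / (σ * Real.sqrt (x₁ + x₂))) ^ 2 / 2) *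
            Real.exp (-((z - m) / s) ^ 2 / 2)) *
          ((Real.sqrt (2 * Real.pi))⁻¹ * (Real.sqrt (2 * Real.pi))⁻¹) * b z := by
        rw [hconst, hexp]
      _ = _ := by ring
  -- reduce the Fin-1 integral to a 1-d integral
  have hfin : ∀ g : ℝ → ℝ, (∫ z : Fin 1 → ℝ, g (z 0)) = ∫ y : ℝ, g y := by
    intro g
    exact (volume_preserving_funUnique (Fin 1) ℝ).integral_comp
      (MeasurableEquiv.funUnique (Fin 1) ℝ).measurableEmbedding g
  have hIic : (Finset.Iic (0 : Fin 1)) = {0} := by decide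
  rw [normalTransform]
  simp only [Fin.sum_univ_succ, Fin.sum_univ_zero, Fin.sum_univ_one, Fin.prod_univ_one, hIic,
    Finset.sum_singleton, Fin.castSucc_zero, show Fin.last 1 = 1 from rfl,
    Fin.succ_zero_eq_one, Matrix.cons_val_zero, Matrix.cons_val_one, Matrix.head_cons, add_zero]
  -- rewrite the integrand pointwise and collapse the Fin-1 integral
  have step1 : (∫ z : Fin 1 → ℝ,
      (σ * Real.sqrt x₁)⁻¹ * phi ((z 0 - μ * x₁) / (σ * Real.sqrt x₁)) * b (z 0) *
        ((σ * Real.sqrt x₂)⁻¹ * phi ((x - z 0 - μ * x₂) / (σ * Real.sqrt x₂)))) =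
      ∫ z : ℝ, K * (s⁻¹ * (b z * phi ((z - m) / s))) := by
    rw [← hfin fun z : ℝ => K * (s⁻¹ * (b z * phi ((z - m) / s)))]
    exact integral_congr_ae (Filter.Eventually.of_forall fun z => key (z 0))
  rw [step1, integral_const_mul, ← hK_def, mul_div_cancel_left₀ _ hK,
    integral_const_mul]
  -- change of variables on the right-hand side
  have step2 : ∀ u : ℝ, b (m + s * u) * phi u =
      (fun v : ℝ => b (v + m) * phi (v / s)) (s * u) := by
    intro u
    simp only [mul_div_cancel_left₀ _ hs.ne']
    rw [add_comm]
  calc s⁻¹ * ∫ z : ℝ, b z * phi ((z - m) / s)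
      = s⁻¹ * ∫ v : ℝ, b (v + m) * phi ((v + m - m) / s) := by
        rw [integral_add_right_eq_self (fun z : ℝ => b z * phi ((z - m) / s)) m]
    _ = |s⁻¹| • ∫ v : ℝ, b (v + m) * phi (v / s) := by
        rw [abs_of_pos (inv_pos.mpr hs), smul_eq_mul]
        simp only [add_sub_cancel_right]
    _ = ∫ u : ℝ, b (m + s * u) * phi u := by
        rw [← Measure.integral_comp_mul_left (fun v : ℝ => b (v + m) * phi (v / s)) s]
        exact integral_congr_ae (Filter.Eventually.of_forall fun u => (step2 u).symm)


end
end

section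
/- Let μ ∈ ℝ, σ > 0, i ≥ 2 a natural number, (b₁,…,b_i) a tuple of bounded Borel measurable maps ℝ → ℝ, x₁,…,x_{i+1} ∈ ]0,∞[, and x ∈ ℝ. Then 𝒩_{(b₁,…,b_i),μ,σ}(x₁,…,x_{i+1},x) = 𝒩_{(b₁,…,b_{i−2},b̃_{i−1}),μ,σ}(x₁,…,x_{i−1}, x_i + x_{i+1}, x), where b̃_{i−1}(z) = b_{i−1}(z) · ∫_ℝ b_i((x_{i+1}/(x_i+x_{i+1}))·z + (x_i/(x_i+x_{i+1}))·x + σ√(x_i x_{i+1}/(x_i+x_{i+1}))·u) φ(u) du. -/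
open MeasureTheory ProbabilityTheory Filter

noncomputable section

open scoped Real
open Real


lemma sum_Iic_castSucc {n : ℕ} (f : Fin (n+1) → ℝ) (j : Fin n) :
    ∑ k ∈ Finset.Iic (Fin.castSucc j), f k = ∑ k ∈ Finset.Iic j, f (Fin.castSucc k) := by
  have h1 : ∀ (m : ℕ) (s : Finset (Fin m)) (g : Fin m → ℝ),
      ∑ k ∈ s, g k = ∑ k : Fin m, if k ∈ s then g k else 0 := by
    intro m s g
    rw [Finset.sum_ite_mem, Finset.univ_inter]
  rw [h1 _ _ f, h1 _ _ (fun k => f (Fin.castSucc k)), Fin.sum_univ_castSucc]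
  simp [Finset.mem_Iic, Fin.castSucc_le_castSucc_iff, (Fin.castSucc_lt_last j).not_ge]

lemma Iic_last_eq_univ {n : ℕ} : Finset.Iic (Fin.last n) = Finset.univ := by
  ext k; simp [Fin.le_last]

lemma phi_bd (u : ℝ) : |phi u| ≤ (Real.sqrt (2 * Real.pi))⁻¹ := by
  have h0 : (0:ℝ) < Real.sqrt (2 * Real.pi) := Real.sqrt_pos.mpr (by positivity)
  rw [phi, abs_mul, abs_of_pos (by positivity), abs_of_pos (Real.exp_pos _)]
  nth_rewrite 2 [← mul_one ((Real.sqrt (2 * Real.pi))⁻¹)]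
  gcongr
  exact Real.exp_le_one_iff.mpr (by nlinarith [sq_nonneg u])

lemma integrable_gauss (a c : ℝ) (hc : 0 < c) (κ : ℝ) :
    Integrable (fun v : ℝ => κ * phi ((v - a) / c)) := by
  have h1 : Integrable (fun v : ℝ => Real.exp (-(1/(2*c^2)) * v^2)) :=
    integrable_exp_neg_mul_sq (by positivity)
  have h2 := h1.comp_sub_right a
  have heq : (fun v : ℝ => κ * phi ((v - a) / c)) =
      fun v => (κ * (Real.sqrt (2 * Real.pi))⁻¹) * Real.exp (-(1/(2*c^2)) * (v-a)^2) := by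
    funext v
    rw [phi, show -((v-a)/c)^2/2 = -(1/(2*c^2)) * (v-a)^2 by rw [div_pow, neg_div, div_div]; ring]
    ring
  rw [heq]
  exact h2.const_mul _

lemma measurable_phi : Measurable phi := by
  unfold phi; fun_prop

lemma integrable_prod_bdd {n : ℕ} (G : Fin n → ℝ → ℝ) (hG : ∀ j, Integrable (G j))
    (B : (Fin n → ℝ) → ℝ) (hB : Measurable B) (C : ℝ) (hC : ∀ z, |B z| ≤ C) :
    Integrable (fun z : Fin n → ℝ => B z * ∏ j, G j (z j)) := by
  refine Integrable.bdd_mul (c := C) (Integrable.fintype_prod hG)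
    hB.aestronglyMeasurable (Filter.Eventually.of_forall fun z => ?_)
  simpa using hC z


lemma gauss_mul (μ σ : ℝ) (hσ : 0 < σ) (p q : ℝ) (hp : 0 < p) (hq : 0 < q) (s v : ℝ) :
    ((σ * Real.sqrt p)⁻¹ * phi ((v - μ * p) / (σ * Real.sqrt p))) *
      ((σ * Real.sqrt q)⁻¹ * phi ((s - v - μ * q) / (σ * Real.sqrt q))) =
    ((σ * Real.sqrt (p + q))⁻¹ * phi ((s - μ * (p + q)) / (σ * Real.sqrt (p + q)))) *
      ((σ * Real.sqrt (p * q / (p + q)))⁻¹ *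
        phi ((v - p * s / (p + q)) / (σ * Real.sqrt (p * q / (p + q))))) := by
  have hpq : 0 < p + q := by linarith
  have hr : 0 < p * q / (p + q) := by positivity
  have sp := Real.sq_sqrt hp.le
  have sq' := Real.sq_sqrt hq.le
  have spq := Real.sq_sqrt hpq.le
  have sr := Real.sq_sqrt hr.le
  have hsp : Real.sqrt p ≠ 0 := by positivity
  have hsq : Real.sqrt q ≠ 0 := by positivity
  have hspq : Real.sqrt (p + q) ≠ 0 := by positivity
  have hsr : Real.sqrt (p * q / (p + q)) ≠ 0 := by positivity
  have hσ' : σ ≠ 0 := hσ.ne'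
  -- coefficient identity
  have hcoef : (σ * Real.sqrt (p + q))⁻¹ * (σ * Real.sqrt (p * q / (p + q)))⁻¹ =
      (σ * Real.sqrt p)⁻¹ * (σ * Real.sqrt q)⁻¹ := by
    rw [← mul_inv, ← mul_inv, mul_mul_mul_comm, mul_mul_mul_comm σ (Real.sqrt p)]
    congr 2
    rw [← Real.sqrt_mul hpq.le, ← Real.sqrt_mul hp.le]
    congr 1
    field_simp
  -- exponent identity
  have hexp : -((v - μ * p) / (σ * Real.sqrt p)) ^ 2 / 2 +
      -((s - v - μ * q) / (σ * Real.sqrt q)) ^ 2 / 2 =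
      -((s - μ * (p + q)) / (σ * Real.sqrt (p + q))) ^ 2 / 2 +
      -((v - p * s / (p + q)) / (σ * Real.sqrt (p * q / (p + q)))) ^ 2 / 2 := by
    rw [div_pow, div_pow, div_pow, div_pow, mul_pow, mul_pow, mul_pow, mul_pow,
      sp, sq', spq, sr]
    field_simp
    ring
  simp only [phi]
  rw [show ((σ * Real.sqrt p)⁻¹ * ((Real.sqrt (2*Real.pi))⁻¹ *
        Real.exp (-((v - μ * p) / (σ * Real.sqrt p)) ^ 2 / 2))) *
      ((σ * Real.sqrt q)⁻¹ * ((Real.sqrt (2*Real.pi))⁻¹ *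
        Real.exp (-((s - v - μ * q) / (σ * Real.sqrt q)) ^ 2 / 2))) =
      ((σ * Real.sqrt p)⁻¹ * (σ * Real.sqrt q)⁻¹) * ((Real.sqrt (2*Real.pi))⁻¹ *
        (Real.sqrt (2*Real.pi))⁻¹) *
        (Real.exp (-((v - μ * p) / (σ * Real.sqrt p)) ^ 2 / 2) *
          Real.exp (-((s - v - μ * q) / (σ * Real.sqrt q)) ^ 2 / 2)) from by ring]
  rw [show ((σ * Real.sqrt (p+q))⁻¹ * ((Real.sqrt (2*Real.pi))⁻¹ *
        Real.exp (-((s - μ * (p+q)) / (σ * Real.sqrt (p+q))) ^ 2 / 2))) *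
      ((σ * Real.sqrt (p*q/(p+q)))⁻¹ * ((Real.sqrt (2*Real.pi))⁻¹ *
        Real.exp (-((v - p*s/(p+q)) / (σ * Real.sqrt (p*q/(p+q)))) ^ 2 / 2))) =
      ((σ * Real.sqrt (p+q))⁻¹ * (σ * Real.sqrt (p*q/(p+q)))⁻¹) * ((Real.sqrt (2*Real.pi))⁻¹ *
        (Real.sqrt (2*Real.pi))⁻¹) *
        (Real.exp (-((s - μ * (p+q)) / (σ * Real.sqrt (p+q))) ^ 2 / 2) *
          Real.exp (-((v - p*s/(p+q)) / (σ * Real.sqrt (p*q/(p+q)))) ^ 2 / 2)) from by ring]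
  rw [hcoef, ← Real.exp_add, ← Real.exp_add, hexp]

lemma integral_comp_affine (g : ℝ → ℝ) (D m : ℝ) (hD : 0 < D) :
    ∫ v : ℝ, g v = D * ∫ u : ℝ, g (D * u + m) := by
  have h1 : ∫ u : ℝ, (fun y => g (y + m)) (D * u) = |D⁻¹| • ∫ y : ℝ, g (y + m) :=
    Measure.integral_comp_mul_left (fun y => g (y + m)) D
  simp only [integral_add_right_eq_self] at h1
  rw [show (fun u : ℝ => g (D * u + m)) = fun u : ℝ => (fun y => g (y + m)) (D * u) from rfl]
  rw [h1, abs_of_pos (by positivity : (0:ℝ) < D⁻¹), smul_eq_mul, ← mul_assoc,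
    mul_inv_cancel₀ hD.ne', one_mul]

lemma conv_gauss (μ σ : ℝ) (hσ : 0 < σ) (p q : ℝ) (hp : 0 < p) (hq : 0 < q) (b : ℝ → ℝ) (t x : ℝ) :
    (∫ v : ℝ, ((σ * Real.sqrt p)⁻¹ * phi ((v - μ * p) / (σ * Real.sqrt p)) * b (t + v)) *
      ((σ * Real.sqrt q)⁻¹ * phi ((x - t - v - μ * q) / (σ * Real.sqrt q)))) =
    ((σ * Real.sqrt (p + q))⁻¹ * phi ((x - t - μ * (p + q)) / (σ * Real.sqrt (p + q)))) *
      ∫ u : ℝ, b (q / (p + q) * t + p / (p + q) * x + σ * Real.sqrt (p * q / (p + q)) * u) *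
        phi u := by
  have hpq : 0 < p + q := by linarith
  have hr : 0 < p * q / (p + q) := by positivity
  set D : ℝ := σ * Real.sqrt (p * q / (p + q)) with hDdef
  have hD : 0 < D := by positivity
  set C : ℝ := (σ * Real.sqrt (p + q))⁻¹ * phi ((x - t - μ * (p + q)) / (σ * Real.sqrt (p + q)))
    with hCdef
  set m : ℝ := p * (x - t) / (p + q) with hmdef
  have point : ∀ v : ℝ,
      ((σ * Real.sqrt p)⁻¹ * phi ((v - μ * p) / (σ * Real.sqrt p)) * b (t + v)) *
        ((σ * Real.sqrt q)⁻¹ * phi ((x - t - v - μ * q) / (σ * Real.sqrt q))) =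
      C * (b (t + v) * (D⁻¹ * phi ((v - m) / D))) := by
    intro v
    have h := gauss_mul μ σ hσ p q hp hq (x - t) v
    calc ((σ * Real.sqrt p)⁻¹ * phi ((v - μ * p) / (σ * Real.sqrt p)) * b (t + v)) *
        ((σ * Real.sqrt q)⁻¹ * phi ((x - t - v - μ * q) / (σ * Real.sqrt q)))
        = (((σ * Real.sqrt p)⁻¹ * phi ((v - μ * p) / (σ * Real.sqrt p))) *
          ((σ * Real.sqrt q)⁻¹ * phi ((x - t - v - μ * q) / (σ * Real.sqrt q)))) * b (t + v) := by
          ring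
      _ = C * (b (t + v) * (D⁻¹ * phi ((v - m) / D))) := by rw [h]; ring
  simp_rw [point]
  rw [integral_const_mul]
  congr 1
  have harg : ∀ u : ℝ, t + m + D * u =
      q / (p + q) * t + p / (p + q) * x + D * u := by
    intro u
    rw [hmdef]
    field_simp
    ring
  have gsub : ∀ u : ℝ, b (t + (D * u + m)) * (D⁻¹ * phi ((D * u + m - m) / D)) =
      D⁻¹ * (b (q / (p + q) * t + p / (p + q) * x + D * u) * phi u) := by
    intro u
    rw [show D * u + m - m = D * u by ring, mul_div_cancel_left₀ u hD.ne',
      show t + (D * u + m) = t + m + D * u by ring, harg u]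
    ring
  rw [integral_comp_affine (fun v => b (t + v) * (D⁻¹ * phi ((v - m) / D))) D m hD]
  simp only [gsub]
  rw [integral_const_mul, ← mul_assoc, mul_inv_cancel₀ hD.ne', one_mul]


set_option maxHeartbeats 2000000 in
open MeasureTheory in
/-- recursive formula for the normal transform. Here the natural
number `i ≥ 2` of the paper is written as `i + 2` (with `i : ℕ` arbitrary), the tuple
`(b₁,…,b_i)` is 0-indexed as `b : Fin (i+2) → ℝ → ℝ`, and `(x₁,…,x_{i+1})` is 0-indexed
as `xs : Fin (i+3) → ℝ`. -/
theorem stmt3 (μ σ : ℝ) (hσ : 0 < σ) (i : ℕ)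
    (b : Fin (i + 2) → ℝ → ℝ) (hb : ∀ j, Measurable (b j))
    (hbd : ∀ j, ∃ C, ∀ z, |b j z| ≤ C)
    (xs : Fin (i + 3) → ℝ) (hxs : ∀ k, 0 < xs k) (x : ℝ) :
    normalTransform μ σ (i + 2) b xs x =
      normalTransform μ σ (i + 1)
        (fun j => if (j : ℕ) < i then b j.castSucc
          else fun z => b j.castSucc z *
            ∫ u : ℝ, b (Fin.last (i + 1))
              (xs (Fin.last (i + 2)) / (xs ⟨i + 1, by omega⟩ + xs (Fin.last (i + 2))) * z +
                xs ⟨i + 1, by omega⟩ / (xs ⟨i + 1, by omega⟩ + xs (Fin.last (i + 2))) * x +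
                σ * Real.sqrt (xs ⟨i + 1, by omega⟩ * xs (Fin.last (i + 2)) /
                  (xs ⟨i + 1, by omega⟩ + xs (Fin.last (i + 2)))) * u) * phi u)
        (fun k => if (k : ℕ) < i + 1 then xs k.castSucc
          else xs ⟨i + 1, by omega⟩ + xs (Fin.last (i + 2))) x := by
  classical
  have hP : (0:ℝ) < xs ⟨i+1, by omega⟩ := hxs _
  have hQ : 0 < xs (Fin.last (i+2)) := hxs _
  unfold normalTransform
  have hsum : (∑ k : Fin (i+2), (if (k:ℕ) < i + 1 then xs k.castSucc
      else xs ⟨i + 1, by omega⟩ + xs (Fin.last (i + 2)))) = ∑ k : Fin (i+3), xs k := by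
    rw [Fin.sum_univ_castSucc (f := fun k : Fin (i+2) => if (k:ℕ) < i + 1 then xs k.castSucc
      else xs ⟨i + 1, by omega⟩ + xs (Fin.last (i + 2)))]
    rw [Fin.sum_univ_castSucc (f := xs),
      Fin.sum_univ_castSucc (f := fun k : Fin (i+2) => xs k.castSucc)]
    simp only [Fin.coe_castSucc, Fin.is_lt, if_true, Fin.val_last, lt_irrefl, if_false]
    rw [show ((Fin.last (i+1)).castSucc : Fin (i+3)) = ⟨i+1, by omega⟩ from rfl]
    ring
  rw [hsum]
  congr 1
  -- abbreviations
  choose C hC using hbd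
  have hC0 : ∀ j, 0 ≤ C j := fun j => le_trans (abs_nonneg _) (hC j 0)
  have hSm : ∀ (n : ℕ) (j : Fin n), Measurable (fun z : Fin n → ℝ => ∑ k ∈ Finset.Iic j, z k) :=
    fun n j => Finset.measurable_sum _ (fun k _ => measurable_pi_apply k)
  set F : (Fin (i + 2) → ℝ) → ℝ := fun z =>
    (∏ j : Fin (i + 2), ((σ * Real.sqrt (xs j.castSucc))⁻¹ *
        phi ((z j - μ * xs j.castSucc) / (σ * Real.sqrt (xs j.castSucc))) *
        b j (∑ k ∈ Finset.Iic j, z k))) *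
      ((σ * Real.sqrt (xs (Fin.last (i + 2))))⁻¹ *
        phi ((x - (∑ k, z k) - μ * xs (Fin.last (i + 2))) /
          (σ * Real.sqrt (xs (Fin.last (i + 2)))))) with hF
  have hFint : Integrable F := by
    have heq : F = fun z =>
        (((∏ j : Fin (i+2), b j (∑ k ∈ Finset.Iic j, z k)) *
          ((σ * Real.sqrt (xs (Fin.last (i + 2))))⁻¹ *
            phi ((x - (∑ k, z k) - μ * xs (Fin.last (i + 2))) /
              (σ * Real.sqrt (xs (Fin.last (i + 2))))))) *
         ∏ j : Fin (i+2), ((σ * Real.sqrt (xs j.castSucc))⁻¹ *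
            phi ((z j - μ * xs j.castSucc) / (σ * Real.sqrt (xs j.castSucc))))) := by
      funext z
      simp only [hF, Finset.prod_mul_distrib]
      exact mul_rotate _ _ _
    rw [heq]
    refine integrable_prod_bdd
      (fun j v => (σ * Real.sqrt (xs j.castSucc))⁻¹ *
        phi ((v - μ * xs j.castSucc) / (σ * Real.sqrt (xs j.castSucc))))
      (fun j => ?_)
      (fun z => (∏ j : Fin (i+2), b j (∑ k ∈ Finset.Iic j, z k)) *
        ((σ * Real.sqrt (xs (Fin.last (i + 2))))⁻¹ *
          phi ((x - (∑ k, z k) - μ * xs (Fin.last (i + 2))) /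
            (σ * Real.sqrt (xs (Fin.last (i + 2))))))) ?_
      ((∏ j, C j) * ((σ * Real.sqrt (xs (Fin.last (i + 2))))⁻¹ *
        (Real.sqrt (2 * Real.pi))⁻¹)) ?_
    · exact integrable_gauss (μ * xs j.castSucc) _
        (by have := hxs j.castSucc; positivity) _
    · apply Measurable.mul
      · exact Finset.measurable_prod _ fun j _ => (hb j).comp (hSm _ j)
      · apply Measurable.const_mul
        apply measurable_phi.comp
        exact ((measurable_const.sub
          (Finset.measurable_sum _ (fun k _ => measurable_pi_apply k))).sub
            measurable_const).div_const _
    · intro z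
      rw [abs_mul]
      apply mul_le_mul
      · rw [Finset.abs_prod]
        exact Finset.prod_le_prod (fun j _ => abs_nonneg _) (fun j _ => hC j _)
      · rw [abs_mul, abs_of_pos (show (0:ℝ) < (σ * Real.sqrt (xs (Fin.last (i + 2))))⁻¹ by
          have := hxs (Fin.last (i+2)); positivity)]
        exact mul_le_mul_of_nonneg_left (phi_bd _) (by positivity)
      · exact abs_nonneg _
      · exact Finset.prod_nonneg fun j _ => hC0 j
  -- split off the last coordinate
  have hmp := volume_preserving_piFinSuccAbove (fun _ : Fin (i+2) => ℝ) (Fin.last (i+1))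
  set e := MeasurableEquiv.piFinSuccAbove (fun _ : Fin (i+2) => ℝ) (Fin.last (i+1)) with he
  have hsymm : ∀ yw : ℝ × (Fin (i+1) → ℝ), e.symm yw = Fin.snoc yw.2 yw.1 := by
    intro yw
    simp [he, MeasurableEquiv.piFinSuccAbove_symm_apply, Fin.insertNthEquiv]
  have h1 : ∫ z, F z = ∫ yw : ℝ × (Fin (i+1) → ℝ), F (Fin.snoc yw.2 yw.1) := by
    rw [← (hmp.symm).integral_comp e.symm.measurableEmbedding F]
    congr 1
    funext yw
    rw [hsymm]
  have hFint' : Integrable (fun yw : ℝ × (Fin (i+1) → ℝ) => F (Fin.snoc yw.2 yw.1)) := by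
    have := ((hmp.symm).integrable_comp_emb e.symm.measurableEmbedding (g := F)).mpr hFint
    have heq2 : (F ∘ e.symm) = fun yw : ℝ × (Fin (i+1) → ℝ) => F (Fin.snoc yw.2 yw.1) := by
      funext yw; simp [Function.comp, hsymm]
    rwa [heq2] at this
  have h2 : (∫ yw : ℝ × (Fin (i+1) → ℝ), F (Fin.snoc yw.2 yw.1)) =
      ∫ w : Fin (i+1) → ℝ, ∫ y : ℝ, F (Fin.snoc w y) := by
    rw [Measure.volume_eq_prod] at hFint' ⊢
    exact integral_prod_symm _ hFint'
  rw [h1, h2]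
  congr 1
  funext w
  have hP' : 0 < xs ((Fin.last (i+1)).castSucc) := hxs _
  have hFy : ∀ y : ℝ, F (Fin.snoc w y) =
      (∏ j : Fin (i+1), ((σ * Real.sqrt (xs j.castSucc.castSucc))⁻¹ *
          phi ((w j - μ * xs j.castSucc.castSucc) /
            (σ * Real.sqrt (xs j.castSucc.castSucc))) *
          b j.castSucc (∑ k ∈ Finset.Iic j, w k))) *
        (((σ * Real.sqrt (xs ((Fin.last (i+1)).castSucc)))⁻¹ *
            phi ((y - μ * xs ((Fin.last (i+1)).castSucc)) /
              (σ * Real.sqrt (xs ((Fin.last (i+1)).castSucc)))) *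
            b (Fin.last (i+1)) ((∑ k : Fin (i+1), w k) + y)) *
          ((σ * Real.sqrt (xs (Fin.last (i+2))))⁻¹ *
            phi ((x - (∑ k : Fin (i+1), w k) - y - μ * xs (Fin.last (i+2))) /
              (σ * Real.sqrt (xs (Fin.last (i+2))))))) := by
    intro y
    simp only [hF, Fin.prod_univ_castSucc, Fin.snoc_castSucc, Fin.snoc_last,
      sum_Iic_castSucc, Iic_last_eq_univ, Fin.sum_univ_castSucc, sub_add_eq_sub_sub]
    ring
  rw [funext hFy, integral_const_mul,
    conv_gauss μ σ hσ _ _ hP' hQ (b (Fin.last (i+1))) (∑ k : Fin (i+1), w k) x]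
  rw [show ((Fin.last (i+1)).castSucc : Fin (i+3)) = ⟨i+1, by omega⟩ from rfl]
  simp only [Fin.prod_univ_castSucc, Fin.coe_castSucc, Fin.is_lt, if_true, ite_true,
    Fin.val_last, lt_irrefl, if_false, ite_false, Iic_last_eq_univ]
  ring

end
end

section
/- In the group sequential trial setting, the mean squared error of the sample mean μ̂_N = K_N/N satisfies the universal bound E[(μ̂_N − μ)²] ≤ σ² · (Σ_{i=1}^L 1/mᵢ + (L+1)/n). -/
open MeasureTheory ProbabilityTheory Filter

noncomputable section

/-- `Ksum X m = X₀ + ⋯ + X_{m-1}`, the sum of the first `m` outcomes. -/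
def Ksum {Ω : Type*} (X : ℕ → Ω → ℝ) (mm : ℕ) (ω : Ω) : ℝ := ∑ k ∈ Finset.range mm, X k ω

/-- `𝒩ᵢ` from the paper (0-indexed: `scriptN μ σ ψ m i` is the paper's `𝒩_{i+1}`). -/
def scriptN (μ σ : ℝ) (ψ : ℕ → ℝ → ℝ) {L : ℕ} (m : Fin L → ℕ) (i : Fin L) (x : ℝ) : ℝ :=
  if (i : ℕ) = 0 then 1
  else normalTransform μ σ i.val
    (fun j => fun z => 1 - ψ (m (j.castLE i.isLt.le)) z)
    (fun k => (m (k.castLE i.isLt) : ℝ) -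
      if (k : ℕ) = 0 then 0
      else (m ⟨(k : ℕ) - 1, by have h1 := k.2; have h2 := i.2; omega⟩ : ℝ))
    x

/-- The group sequential trial setting from the paper. -/
structure IsGST {Ω : Type*} [MeasurableSpace Ω] (P : Measure Ω) (X : ℕ → Ω → ℝ)
    (μ σ : ℝ) (ψ : ℕ → ℝ → ℝ) (L : ℕ) (m : Fin L → ℕ) (n : ℕ) (N : Ω → ℕ) : Prop where
  isProb : IsProbabilityMeasure P
  sigma_pos : 0 < σ
  meas_X : ∀ k, Measurable (X k)
  indep_X : iIndepFun X P
  map_X : ∀ k, Measure.map (X k) P = gaussianReal μ ⟨σ ^ 2, sq_nonneg σ⟩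
  meas_psi : ∀ k, Measurable (ψ k)
  psi_mem : ∀ k z, ψ k z ∈ Set.Icc (0 : ℝ) 1
  L_pos : 0 < L
  m_pos : ∀ i, 0 < m i
  m_mono : StrictMono m
  m_lt_n : ∀ i, m i < n
  meas_N : Measurable N
  range_N : ∀ ω, N ω = n ∨ ∃ i, N ω = m i
  indep_N : ∀ i : Fin L,
    Indep (MeasurableSpace.generateFrom {{ω | N ω = m i}})
      (⨆ (k : ℕ) (_ : m i ≤ k), MeasurableSpace.comap (X k) inferInstance) P
  cond_N : ∀ i : Fin L,
    (P[(Set.indicator {ω | N ω = m i} fun _ => (1 : ℝ)) |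
        MeasurableSpace.comap (fun ω (k : Fin (m i)) => X k ω) inferInstance])
      =ᵐ[P] fun ω => ψ (m i) (Ksum X (m i) ω) *
        ∏ j ∈ Finset.univ.filter (fun j => j < i), (1 - ψ (m j) (Ksum X (m j) ω))

/-- The pointwise product `ψ_{mᵢ}𝒩ᵢ`. -/
def psiN (μ σ : ℝ) (ψ : ℕ → ℝ → ℝ) {L : ℕ} (m : Fin L → ℕ) (i : Fin L) (x : ℝ) : ℝ :=
  ψ (m i) x * scriptN μ σ ψ m i x



section MyHelpers
open Real
open scoped NNReal ENNReal

lemma my_gauss_int (v : ℝ≥0) (hv : v ≠ 0) (g : ℝ → ℝ) :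
    ∫ x, g x ∂(gaussianReal 0 v) = ∫ x, gaussianPDFReal 0 v x * g x := by
  rw [gaussianReal_of_var_ne_zero _ hv]
  have h : (gaussianPDF 0 v) = fun x => ((gaussianPDFReal 0 v x).toNNReal : ℝ≥0∞) := by
    ext x; simp [gaussianPDF, ENNReal.ofReal]
  rw [h, integral_withDensity_eq_integral_smul ((measurable_gaussianPDFReal 0 v).real_toNNReal)]
  congr 1; ext x
  simp [NNReal.smul_def, Real.coe_toNNReal _ (gaussianPDFReal_nonneg 0 v x)]

lemma my_gauss_mean (v : ℝ≥0) (hv : v ≠ 0) : ∫ x, x ∂(gaussianReal 0 v) = 0 := by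
  rw [my_gauss_int v hv]
  have h := integral_neg_eq_self (fun x => gaussianPDFReal 0 v x * x) (volume : Measure ℝ)
  have h2 : ∀ x : ℝ, gaussianPDFReal 0 v (-x) * (-x) = -(gaussianPDFReal 0 v x * x) := by
    intro x
    have : gaussianPDFReal 0 v (-x) = gaussianPDFReal 0 v x := by
      simp [gaussianPDFReal]
    rw [this]; ring
  simp_rw [h2] at h
  rw [integral_neg] at h
  linarith

lemma my_int_sq_exp {b : ℝ} (hb : 0 < b) :
    ∫ x : ℝ, x ^ 2 * Real.exp (-b * x ^ 2) = b ^ (-(3:ℝ)/2) * Real.sqrt π / 2 := by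
  have key : ∀ x : ℝ, x ^ (2:ℝ) = x ^ (2:ℕ) := fun x => by
    rw [show (2:ℝ) = ((2:ℕ):ℝ) by norm_num, Real.rpow_natCast]
  have h1 : ∫ x : ℝ, x ^ 2 * rexp (-b * x ^ 2)
      = 2 * ∫ x in Set.Ioi (0:ℝ), x ^ 2 * rexp (-b * x ^ 2) := by
    rw [← integral_comp_abs (f := fun x => x ^ 2 * rexp (-b * x ^ 2))]
    congr 1; ext x; rw [sq_abs]
  have h2 : ∫ x in Set.Ioi (0:ℝ), x ^ 2 * rexp (-b * x ^ 2)
      = b ^ (-((2:ℝ) + 1) / 2) * (1 / 2) * Real.Gamma (((2:ℝ)+1)/2) := by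
    rw [← integral_rpow_mul_exp_neg_mul_rpow (by norm_num : (0:ℝ) < 2)
      (by norm_num : (-1:ℝ) < 2) hb]
    exact setIntegral_congr_fun measurableSet_Ioi fun x _ => by rw [key x]
  have h3 : Real.Gamma (((2:ℝ)+1)/2) = Real.sqrt π / 2 := by
    rw [show ((2:ℝ)+1)/2 = 1/2 + 1 by norm_num, Real.Gamma_add_one (by norm_num),
      Real.Gamma_one_half_eq]; ring
  rw [h1, h2, h3]
  rw [show (-((2:ℝ) + 1) / 2) = -(3:ℝ)/2 by norm_num]
  ring

lemma my_gauss_sq (v : ℝ≥0) (hv : v ≠ 0) :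
    ∫ x, x ^ 2 ∂(gaussianReal 0 v) = (v : ℝ) := by
  have hvpos : (0:ℝ) < (v:ℝ) := by exact_mod_cast pos_iff_ne_zero.2 hv
  have h2v : (0:ℝ) < 2 * (v:ℝ) := by linarith
  have hb : (0:ℝ) < (2 * (v:ℝ))⁻¹ := by positivity
  rw [my_gauss_int v hv]
  have hpt : ∀ x : ℝ, gaussianPDFReal 0 v x * x ^ 2
      = (Real.sqrt (2 * π * (v:ℝ)))⁻¹ * (x ^ 2 * rexp (-(2 * (v:ℝ))⁻¹ * x ^ 2)) := by
    intro x
    rw [gaussianPDFReal]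
    rw [show -(x - 0) ^ 2 / (2 * (v:ℝ)) = -(2 * (v:ℝ))⁻¹ * x ^ 2 by ring]
    ring
  simp_rw [hpt]
  rw [integral_const_mul, my_int_sq_exp hb]
  have e1 : ((2 * (v:ℝ))⁻¹) ^ (-(3:ℝ)/2) = (2 * (v:ℝ)) * Real.sqrt (2 * (v:ℝ)) := by
    rw [Real.inv_rpow h2v.le, show -(3:ℝ)/2 = -((3:ℝ)/2) by norm_num,
      Real.rpow_neg h2v.le, inv_inv,
      show (3:ℝ)/2 = 1 + 1/2 by norm_num, Real.rpow_add h2v, Real.rpow_one,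
      ← Real.sqrt_eq_rpow]
  have e2 : Real.sqrt (2 * π * (v:ℝ)) = Real.sqrt (2*(v:ℝ)) * Real.sqrt π := by
    rw [show 2 * π * (v:ℝ) = (2*(v:ℝ)) * π by ring, Real.sqrt_mul h2v.le]
  rw [e1, e2]
  have s1 : 0 < Real.sqrt (2*(v:ℝ)) := Real.sqrt_pos.2 h2v
  have s2 : 0 < Real.sqrt π := Real.sqrt_pos.2 pi_pos
  have hsq : Real.sqrt (2*(v:ℝ)) * Real.sqrt (2*(v:ℝ)) = 2*(v:ℝ) := Real.mul_self_sqrt h2v.le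
  field_simp

lemma my_gauss_sq_int (v : ℝ≥0) (hv : v ≠ 0) :
    Integrable (fun x : ℝ => x ^ 2) (gaussianReal 0 v) := by
  have hvpos : (0:ℝ) < (v:ℝ) := by exact_mod_cast pos_iff_ne_zero.2 hv
  have h2v : (0:ℝ) < 2 * (v:ℝ) := by linarith
  have hb : (0:ℝ) < (2 * (v:ℝ))⁻¹ := by positivity
  rw [gaussianReal_of_var_ne_zero _ hv]
  have h : (gaussianPDF 0 v) = fun x => ((gaussianPDFReal 0 v x).toNNReal : ℝ≥0∞) := by
    ext x; simp [gaussianPDF, ENNReal.ofReal]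
  rw [h, integrable_withDensity_iff_integrable_smul
    ((measurable_gaussianPDFReal 0 v).real_toNNReal)]
  have hint : Integrable (fun x : ℝ => x ^ 2 * rexp (-(2 * (v:ℝ))⁻¹ * x ^ 2)) := by
    have := integrable_rpow_mul_exp_neg_mul_sq hb (by norm_num : (-1:ℝ) < 2)
    have e : ∀ x : ℝ, x ^ (2:ℝ) = x ^ (2:ℕ) := fun x => by
      rw [show (2:ℝ) = ((2:ℕ):ℝ) by norm_num, Real.rpow_natCast]
    simpa only [e] using this
  have hpt : (fun x : ℝ => (gaussianPDFReal 0 v x).toNNReal • (x ^ 2))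
      = fun x => (Real.sqrt (2 * π * (v:ℝ)))⁻¹ * (x ^ 2 * rexp (-(2 * (v:ℝ))⁻¹ * x ^ 2)) := by
    ext x
    rw [NNReal.smul_def, Real.coe_toNNReal _ (gaussianPDFReal_nonneg 0 v x), smul_eq_mul,
      gaussianPDFReal, show -(x - 0) ^ 2 / (2 * (v:ℝ)) = -(2 * (v:ℝ))⁻¹ * x ^ 2 by ring]
    ring
  rw [hpt]
  exact hint.const_mul _

lemma my_key {Ω : Type*} [MeasurableSpace Ω] (P : Measure Ω) [IsProbabilityMeasure P]
    (X : ℕ → Ω → ℝ) (μ σ : ℝ) (hσ : 0 < σ) (hmX : ∀ k, Measurable (X k))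
    (hind : iIndepFun X P)
    (hmap : ∀ k, Measure.map (X k) P = gaussianReal μ ⟨σ ^ 2, sq_nonneg σ⟩)
    (mm : ℕ) (hmm : 0 < mm) :
    Integrable (fun ω => (Ksum X mm ω / mm - μ) ^ 2) P ∧
      ∫ ω, (Ksum X mm ω / mm - μ) ^ 2 ∂P = σ ^ 2 / mm := by
  set v : ℝ≥0 := ⟨σ ^ 2, sq_nonneg σ⟩ with hvdef
  have hvσ : (v : ℝ) = σ ^ 2 := rfl
  have hv : v ≠ 0 := by
    intro h0
    rw [h0, NNReal.coe_zero] at hvσ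
    nlinarith
  set Y : ℕ → Ω → ℝ := fun k ω => X k ω - μ with hY
  have hmY : ∀ k, Measurable (Y k) := fun k => (hmX k).sub measurable_const
  have hYmap : ∀ k, Measure.map (Y k) P = gaussianReal 0 v := by
    intro k
    have hc : Y k = (fun x => x + (-μ)) ∘ X k := by ext ω; simp [hY, sub_eq_add_neg]
    rw [hc, ← Measure.map_map (measurable_add_const (-μ)) (hmX k), hmap k,
      gaussianReal_map_add_const, add_neg_cancel]
  have hYmem : ∀ k, MemLp (Y k) 2 P := by
    intro k
    have h1 : MemLp (id : ℝ → ℝ) 2 (gaussianReal 0 v) := by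
      rw [memLp_two_iff_integrable_sq aestronglyMeasurable_id]
      have := my_gauss_sq_int v hv
      exact this
    have h2 := (memLp_map_measure_iff (g := (id : ℝ → ℝ))
      (by exact aestronglyMeasurable_id) (hmY k).aemeasurable).1
      (by rw [hYmap k]; exact h1)
    simpa [Function.comp_def] using h2
  have hYint0 : ∀ k, ∫ ω, Y k ω ∂P = 0 := by
    intro k
    calc ∫ ω, Y k ω ∂P = ∫ x, x ∂(Measure.map (Y k) P) :=
          (integral_map (hmY k).aemeasurable aestronglyMeasurable_id).symm
      _ = 0 := by rw [hYmap k]; exact my_gauss_mean v hv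
  have hYsq : ∀ k, ∫ ω, (Y k ω) ^ 2 ∂P = σ ^ 2 := by
    intro k
    calc ∫ ω, (Y k ω) ^ 2 ∂P = ∫ x, x ^ 2 ∂(Measure.map (Y k) P) :=
          (integral_map (hmY k).aemeasurable
            ((measurable_id.pow_const 2).aestronglyMeasurable)).symm
      _ = σ ^ 2 := by rw [hYmap k, my_gauss_sq v hv, hvσ]
  have hYvar : ∀ k, variance (Y k) P = σ ^ 2 := by
    intro k
    rw [variance_eq_sub (hYmem k)]
    have e1 : P[(Y k) ^ 2] = σ ^ 2 := by
      simp only [Pi.pow_apply]; exact hYsq k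
    have e2 : P[Y k] = 0 := hYint0 k
    rw [e1, e2]; ring
  have hpair : Set.Pairwise ↑(Finset.range mm) fun i j => IndepFun (Y i) (Y j) P := by
    intro i _ j _ hij
    exact IndepFun.comp (hind.indepFun hij) (measurable_id.sub_const μ)
      (measurable_id.sub_const μ)
  have hvarS : variance (∑ k ∈ Finset.range mm, Y k) P = mm * σ ^ 2 := by
    rw [IndepFun.variance_sum (fun k _ => hYmem k) hpair]
    simp [hYvar, Finset.sum_const, Finset.card_range]
  have hSmem : MemLp (∑ k ∈ Finset.range mm, Y k) 2 P :=
    memLp_finset_sum' _ (fun k _ => hYmem k)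
  have hSint : P[∑ k ∈ Finset.range mm, Y k] = 0 := by
    have : P[∑ k ∈ Finset.range mm, Y k] = ∫ ω, ∑ k ∈ Finset.range mm, Y k ω ∂P := by
      congr 1; ext ω; simp [Finset.sum_apply]
    rw [this, integral_finset_sum _ (fun k _ => (hYmem k).integrable one_le_two)]
    simp [hYint0]
  have hSsq : P[(∑ k ∈ Finset.range mm, Y k) ^ 2] = mm * σ ^ 2 := by
    have := variance_eq_sub hSmem
    rw [hvarS, hSint] at this
    nlinarith [this]
  have hmm' : (mm:ℝ) ≠ 0 := Nat.cast_ne_zero.2 hmm.ne'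
  have hfun : (fun ω => (Ksum X mm ω / mm - μ) ^ 2)
      = fun ω => ((mm:ℝ)⁻¹) ^ 2 * ((∑ k ∈ Finset.range mm, Y k) ω) ^ 2 := by
    ext ω
    have hs : (∑ k ∈ Finset.range mm, Y k) ω = Ksum X mm ω - mm * μ := by
      simp [hY, Ksum, Finset.sum_apply, Finset.sum_sub_distrib]
    rw [hs]
    field_simp
  have hint : Integrable (fun ω => ((mm:ℝ)⁻¹) ^ 2
      * ((∑ k ∈ Finset.range mm, Y k) ω) ^ 2) P := by
    have := hSmem.integrable_sq
    exact (this.congr (by rfl)).const_mul _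
  constructor
  · rw [hfun]; exact hint
  · rw [hfun, integral_const_mul]
    have : ∫ ω, ((∑ k ∈ Finset.range mm, Y k) ω) ^ 2 ∂P = mm * σ ^ 2 := by
      simpa [Pi.pow_apply] using hSsq
    rw [this]
    field_simp

end MyHelpers

/-- universal bound for the MSE of the sample mean. -/
theorem stmt15 {Ω : Type*} [MeasurableSpace Ω] (P : Measure Ω) (X : ℕ → Ω → ℝ)
    (μ σ : ℝ) (ψ : ℕ → ℝ → ℝ) (L : ℕ) (m : Fin L → ℕ) (n : ℕ) (N : Ω → ℕ)
    (hGST : IsGST P X μ σ ψ L m n N) :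
    ∫ ω, (Ksum X (N ω) ω / (N ω : ℝ) - μ) ^ 2 ∂P ≤
      σ ^ 2 * ((∑ i : Fin L, 1 / (m i : ℝ)) + ((L : ℝ) + 1) / n) := by
  haveI := hGST.isProb
  have hL := hGST.L_pos
  have hn : 0 < n := (hGST.m_pos ⟨0, hL⟩).trans (hGST.m_lt_n ⟨0, hL⟩)
  have hkey := fun (mm : ℕ) (hmm : 0 < mm) =>
    my_key P X μ σ hGST.sigma_pos hGST.meas_X hGST.indep_X hGST.map_X mm hmm
  have hgint : Integrable (fun ω => (∑ i : Fin L, (Ksum X (m i) ω / (m i : ℝ) - μ) ^ 2)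
      + (Ksum X n ω / n - μ) ^ 2) P := by
    exact (integrable_finset_sum _ (fun i _ => (hkey (m i) (hGST.m_pos i)).1)).add (hkey n hn).1
  have hle : ∀ ω, (Ksum X (N ω) ω / (N ω : ℝ) - μ) ^ 2
      ≤ (∑ i : Fin L, (Ksum X (m i) ω / (m i : ℝ) - μ) ^ 2) + (Ksum X n ω / n - μ) ^ 2 := by
    intro ω
    rcases hGST.range_N ω with h | ⟨i, h⟩
    · rw [h]
      have h1 : 0 ≤ ∑ i : Fin L, (Ksum X (m i) ω / (m i : ℝ) - μ) ^ 2 :=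
        Finset.sum_nonneg fun i _ => sq_nonneg _
      linarith
    · rw [h]
      have h1 : (Ksum X (m i) ω / (m i : ℝ) - μ) ^ 2
          ≤ ∑ j : Fin L, (Ksum X (m j) ω / (m j : ℝ) - μ) ^ 2 :=
        Finset.single_le_sum (f := fun j : Fin L => (Ksum X (m j) ω / (m j : ℝ) - μ) ^ 2)
          (fun j _ => sq_nonneg _) (Finset.mem_univ i)
      have h2 : (0:ℝ) ≤ (Ksum X n ω / n - μ) ^ 2 := sq_nonneg _
      linarith
  have hmono := integral_mono_of_nonneg
    (Filter.Eventually.of_forall fun ω => sq_nonneg (Ksum X (N ω) ω / (N ω : ℝ) - μ))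
    hgint (Filter.Eventually.of_forall hle)
  refine hmono.trans ?_
  have hval : ∫ ω, ((∑ i : Fin L, (Ksum X (m i) ω / (m i : ℝ) - μ) ^ 2)
      + (Ksum X n ω / n - μ) ^ 2) ∂P
      = (∑ i : Fin L, σ ^ 2 / (m i : ℝ)) + σ ^ 2 / n := by
    rw [integral_add (integrable_finset_sum _ (fun i _ => (hkey (m i) (hGST.m_pos i)).1))
        (hkey n hn).1,
      integral_finset_sum _ (fun i _ => (hkey (m i) (hGST.m_pos i)).1), (hkey n hn).2]
    congr 1
    exact Finset.sum_congr rfl fun i _ => (hkey (m i) (hGST.m_pos i)).2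
  rw [hval]
  have hsum : ∑ i : Fin L, σ ^ 2 / (m i : ℝ) = σ ^ 2 * ∑ i : Fin L, 1 / (m i : ℝ) := by
    rw [Finset.mul_sum]
    exact Finset.sum_congr rfl fun i _ => by ring
  rw [hsum, mul_add]
  have h3 : σ ^ 2 ≤ σ ^ 2 * ((L : ℝ) + 1) := by
    nlinarith [sq_nonneg σ, Nat.cast_nonneg (α := ℝ) L]
  have h4 : σ ^ 2 / n ≤ σ ^ 2 * ((L : ℝ) + 1) / n :=
    (div_le_div_iff_of_pos_right (by exact_mod_cast hn)).2 h3
  rw [mul_div_assoc] at h4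
  linarith

end
end

section
/- In the group sequential trial setting with interim analyses after every m observations, i.e. mᵢ = i·m for i ∈ {1,…,L} and n = (L+1)·m with m ≥ 1, the mean squared error of the sample mean μ̂_N = K_N/N satisfies E[(μ̂_N − μ)²] ≤ (σ²/m)(1 + Σ_{i=1}^L 1/i) ≤ (σ²/m)(2 + log L), and consequently the bias satisfies |E[μ̂_N − μ]| ≤ σ√((2 + log L)/m), where log is the natural logarithm. -/
open MeasureTheory ProbabilityTheory Filter

noncomputable section

section AuxLemmas
open Real Set
open scoped NNReal ENNReal


lemma aux_tendsto_exp_neg_mul_sq {b : ℝ} (hb : 0 < b) :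
    Tendsto (fun x : ℝ => Real.exp (-b * x ^ 2)) (Filter.cocompact ℝ) (nhds 0) := by
  have h := tendsto_rpow_abs_mul_exp_neg_mul_sq_cocompact hb 0
  simpa using h

lemma aux_tendsto_mul_exp_neg_mul_sq {b : ℝ} (hb : 0 < b) :
    Tendsto (fun x : ℝ => x * Real.exp (-b * x ^ 2)) (Filter.cocompact ℝ) (nhds 0) := by
  have h := tendsto_rpow_abs_mul_exp_neg_mul_sq_cocompact hb 1
  refine squeeze_zero_norm (fun x => ?_) h
  simp [abs_mul, abs_of_nonneg (Real.exp_nonneg _)]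

lemma aux_integrable_sq_mul_exp_neg_mul_sq {b : ℝ} (hb : 0 < b) :
    Integrable fun x : ℝ => x ^ 2 * Real.exp (-b * x ^ 2) := by
  have h := integrable_rpow_mul_exp_neg_mul_sq hb (by norm_num : (-1:ℝ) < 2)
  have e : ∀ x : ℝ, x ^ (2:ℝ) = x ^ (2:ℕ) := fun x => by
    rw [show (2:ℝ) = ((2:ℕ):ℝ) by norm_num, Real.rpow_natCast]
  simpa [e] using h

/-- Full-line FTC: if `F' = f`, `f` integrable, `F → 0` at both infinities, then `∫ f = 0`. -/
lemma aux_integral_eq_zero_of_hasDerivAt {F f : ℝ → ℝ}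
    (hd : ∀ x, HasDerivAt F (f x) x) (hi : Integrable f)
    (ht : Tendsto F (Filter.cocompact ℝ) (nhds 0)) : ∫ x, f x = 0 := by
  have htop : Tendsto F atTop (nhds 0) := ht.mono_left (le_sup_right.trans cocompact_eq_atBot_atTop.ge)
  have hbot : Tendsto F atBot (nhds 0) := ht.mono_left (le_sup_left.trans cocompact_eq_atBot_atTop.ge)
  have h1 : ∫ x in Iic (0:ℝ), f x = F 0 - 0 :=
    MeasureTheory.integral_Iic_of_hasDerivAt_of_tendsto'
      (fun x _ => hd x) hi.integrableOn hbot
  have h2 : ∫ x in Ioi (0:ℝ), f x = 0 - F 0 :=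
    MeasureTheory.integral_Ioi_of_hasDerivAt_of_tendsto'
      (fun x _ => hd x) hi.integrableOn htop
  rw [← intervalIntegral.integral_Iic_add_Ioi hi.integrableOn hi.integrableOn, h1, h2]
  ring

lemma aux_integral_mul_exp_neg_mul_sq {b : ℝ} (hb : 0 < b) :
    ∫ x : ℝ, x * Real.exp (-b * x ^ 2) = 0 := by
  have hb' : (2*b) ≠ 0 := by positivity
  have hd : ∀ x : ℝ, HasDerivAt (fun x : ℝ => -(2*b)⁻¹ * Real.exp (-b * x ^ 2))
      (x * Real.exp (-b * x ^ 2)) x := by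
    intro x
    have h1 : HasDerivAt (fun x : ℝ => -b * x ^ 2) (-b * (2*x)) x := by
      simpa using (hasDerivAt_pow 2 x).const_mul (-b)
    have h2 := (h1.exp).const_mul (-(2*b)⁻¹)
    refine h2.congr_deriv ?_
    field_simp
  refine aux_integral_eq_zero_of_hasDerivAt hd (integrable_mul_exp_neg_mul_sq hb) ?_
  simpa using (aux_tendsto_exp_neg_mul_sq hb).const_mul (-(2*b)⁻¹)

lemma aux_integral_sq_mul_exp_neg_mul_sq {b : ℝ} (hb : 0 < b) :
    ∫ x : ℝ, x ^ 2 * Real.exp (-b * x ^ 2) = (2*b)⁻¹ * Real.sqrt (π / b) := by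
  have hb' : (2*b) ≠ 0 := by positivity
  have hd : ∀ x : ℝ, HasDerivAt (fun x : ℝ => -(2*b)⁻¹ * (x * Real.exp (-b * x ^ 2)))
      (x ^ 2 * Real.exp (-b * x ^ 2) - (2*b)⁻¹ * Real.exp (-b * x ^ 2)) x := by
    intro x
    have h1 : HasDerivAt (fun x : ℝ => -b * x ^ 2) (-b * (2*x)) x := by
      simpa using (hasDerivAt_pow 2 x).const_mul (-b)
    have h2 : HasDerivAt (fun x : ℝ => x * Real.exp (-b * x ^ 2))
        (1 * Real.exp (-b * x ^ 2) + x * (Real.exp (-b * x ^ 2) * (-b * (2*x)))) x :=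
      (hasDerivAt_id x).mul h1.exp
    have h3 := h2.const_mul (-(2*b)⁻¹)
    refine h3.congr_deriv ?_
    field_simp
    ring
  have hint : Integrable (fun x : ℝ =>
      x ^ 2 * Real.exp (-b * x ^ 2) - (2*b)⁻¹ * Real.exp (-b * x ^ 2)) :=
    (aux_integrable_sq_mul_exp_neg_mul_sq hb).sub ((integrable_exp_neg_mul_sq hb).const_mul _)
  have ht : Tendsto (fun x : ℝ => -(2*b)⁻¹ * (x * Real.exp (-b * x ^ 2)))
      (Filter.cocompact ℝ) (nhds 0) := by
    simpa using (aux_tendsto_mul_exp_neg_mul_sq hb).const_mul (-(2*b)⁻¹)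
  have h0 := aux_integral_eq_zero_of_hasDerivAt hd hint ht
  rw [integral_sub (aux_integrable_sq_mul_exp_neg_mul_sq hb)
    ((integrable_exp_neg_mul_sq hb).const_mul _), integral_const_mul,
    integral_gaussian, sub_eq_zero] at h0
  rw [h0]

lemma aux_integral_gaussianReal (μ : ℝ) {v : ℝ≥0} (hv : v ≠ 0) (g : ℝ → ℝ) :
    ∫ x, g x ∂(gaussianReal μ v) = ∫ x, gaussianPDFReal μ v x * g x := by
  rw [gaussianReal_of_var_ne_zero _ hv]
  have hrw : (gaussianPDF μ v)
      = fun x => ((Real.toNNReal (gaussianPDFReal μ v x) : ℝ≥0) : ℝ≥0∞) := by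
    funext x; rfl
  rw [hrw, integral_withDensity_eq_integral_smul
    ((measurable_gaussianPDFReal μ v).real_toNNReal) g]
  congr 1; funext x
  simp [NNReal.smul_def, Real.coe_toNNReal _ (gaussianPDFReal_nonneg μ v x)]

lemma aux_pdf_eq (μ : ℝ) {v : ℝ≥0} (x : ℝ) :
    gaussianPDFReal μ v x
      = (Real.sqrt (2*π*(v:ℝ)))⁻¹ * Real.exp (-(2*(v:ℝ))⁻¹ * (x - μ)^2) := by
  rw [gaussianPDFReal]
  have h : -(x - μ)^2 / (2*(v:ℝ)) = -(2*(v:ℝ))⁻¹ * (x - μ)^2 := by ring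
  rw [h]

lemma aux_const_sqrt {v : ℝ≥0} (hv : v ≠ 0) :
    (Real.sqrt (2*π*(v:ℝ)))⁻¹ * Real.sqrt (π / (2*(v:ℝ))⁻¹) = 1 := by
  have hv0 : (0:ℝ) < v := by exact_mod_cast pos_iff_ne_zero.mpr hv
  have h : π / (2*(v:ℝ))⁻¹ = 2*π*(v:ℝ) := by rw [div_eq_mul_inv, inv_inv]; ring
  rw [h]
  exact inv_mul_cancel₀ (ne_of_gt (Real.sqrt_pos.mpr (by positivity)))

lemma aux_integral_id_gaussianReal (μ : ℝ) {v : ℝ≥0} (hv : v ≠ 0) :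
    ∫ x, x ∂(gaussianReal μ v) = μ := by
  have hv0 : (0:ℝ) < v := by exact_mod_cast pos_iff_ne_zero.mpr hv
  set b : ℝ := (2*(v:ℝ))⁻¹ with hbdef
  have hb : 0 < b := by positivity
  set c : ℝ := (Real.sqrt (2*π*(v:ℝ)))⁻¹ with hcdef
  rw [aux_integral_gaussianReal μ hv]
  simp_rw [aux_pdf_eq μ, ← hbdef, ← hcdef]
  have hshift : (∫ x, c * Real.exp (-b * (x - μ)^2) * x)
      = ∫ x, c * Real.exp (-b * x^2) * (x + μ) := by
    rw [← integral_add_right_eq_self (fun x => c * Real.exp (-b * x^2) * (x + μ)) (-μ)]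
    congr 1; funext x
    rw [show x + -μ = x - μ by ring, show x - μ + μ = x by ring]
  rw [hshift]
  have h1 : Integrable (fun x : ℝ => x * Real.exp (-b * x^2)) := integrable_mul_exp_neg_mul_sq hb
  have h2 : Integrable (fun x : ℝ => Real.exp (-b * x^2)) := integrable_exp_neg_mul_sq hb
  have he : (fun x : ℝ => c * Real.exp (-b * x^2) * (x + μ))
      = fun x => c * (x * Real.exp (-b * x^2)) + (c * μ) * Real.exp (-b * x^2) := by
    funext x; ring
  rw [he, integral_add (h1.const_mul c) (h2.const_mul (c*μ)), integral_const_mul,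
    integral_const_mul, aux_integral_mul_exp_neg_mul_sq hb, integral_gaussian, mul_zero, zero_add,
    mul_comm c μ, mul_assoc, aux_const_sqrt hv, mul_one]

lemma aux_integral_sub_sq_gaussianReal (μ : ℝ) {v : ℝ≥0} (hv : v ≠ 0) :
    ∫ x, (x - μ)^2 ∂(gaussianReal μ v) = v := by
  have hv0 : (0:ℝ) < v := by exact_mod_cast pos_iff_ne_zero.mpr hv
  set b : ℝ := (2*(v:ℝ))⁻¹ with hbdef
  have hb : 0 < b := by positivity
  set c : ℝ := (Real.sqrt (2*π*(v:ℝ)))⁻¹ with hcdef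
  rw [aux_integral_gaussianReal μ hv]
  simp_rw [aux_pdf_eq μ, ← hbdef, ← hcdef]
  have hshift : (∫ x, c * Real.exp (-b * (x - μ)^2) * (x - μ)^2)
      = ∫ x, c * Real.exp (-b * x^2) * x^2 := by
    rw [← integral_add_right_eq_self (fun x => c * Real.exp (-b * x^2) * x^2) (-μ)]
    congr 1
  rw [hshift]
  have he : (fun x : ℝ => c * Real.exp (-b * x^2) * x^2)
      = fun x => c * (x^2 * Real.exp (-b * x^2)) := by funext x; ring
  rw [he, integral_const_mul, aux_integral_sq_mul_exp_neg_mul_sq hb]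
  have : c * ((2*b)⁻¹ * Real.sqrt (π / b)) = (2*b)⁻¹ * (c * Real.sqrt (π / b)) := by ring
  rw [this, hcdef, hbdef, aux_const_sqrt hv, mul_one]
  rw [show (2*(2*(v:ℝ))⁻¹)⁻¹ = v by field_simp]

lemma aux_memLp_id_gaussianReal (μ : ℝ) {v : ℝ≥0} (hv : v ≠ 0) :
    MemLp id 2 (gaussianReal μ v) := by
  have hv0 : (0:ℝ) < v := by exact_mod_cast pos_iff_ne_zero.mpr hv
  set b : ℝ := (2*(v:ℝ))⁻¹ with hbdef
  have hb : 0 < b := by positivity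
  set c : ℝ := (Real.sqrt (2*π*(v:ℝ)))⁻¹ with hcdef
  rw [memLp_two_iff_integrable_sq aestronglyMeasurable_id]
  rw [gaussianReal_of_var_ne_zero _ hv]
  rw [integrable_withDensity_iff (measurable_gaussianPDF μ v)
    (ae_of_all _ fun x => ENNReal.ofReal_lt_top)]
  have hrw : (fun x : ℝ => id x ^ 2 * (gaussianPDF μ v x).toReal)
      = fun x => x^2 * (c * Real.exp (-b * (x - μ)^2)) := by
    funext x
    rw [gaussianPDF, ENNReal.toReal_ofReal (gaussianPDFReal_nonneg _ _ _), aux_pdf_eq μ,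
      ← hbdef, ← hcdef, id]
  rw [hrw]
  have hint : Integrable (fun x : ℝ => (x+μ)^2 * (c * Real.exp (-b * x^2))) := by
    have he : (fun x : ℝ => (x+μ)^2 * (c * Real.exp (-b * x^2)))
        = fun x => c * (x^2 * Real.exp (-b * x^2)) + ((2*μ*c) * (x * Real.exp (-b * x^2))
            + (μ^2*c) * Real.exp (-b * x^2)) := by
      funext x; ring
    rw [he]
    exact ((aux_integrable_sq_mul_exp_neg_mul_sq hb).const_mul c).add
      (((integrable_mul_exp_neg_mul_sq hb).const_mul _).add
        ((integrable_exp_neg_mul_sq hb).const_mul _))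
  have h2 := hint.comp_sub_right μ
  simpa using h2

lemma aux_harmonic : ∀ L : ℕ, 1 ≤ L → ∑ i ∈ Finset.Icc 1 L, (1:ℝ)/i ≤ 1 + Real.log L := by
  intro L
  induction L with
  | zero => omega
  | succ L ih =>
    intro _
    rcases Nat.eq_zero_or_pos L with rfl | hL
    · simp
    have h1 := ih hL
    rw [Finset.sum_Icc_succ_top (by omega : 1 ≤ L + 1)]
    have hL0 : (0:ℝ) < L := by exact_mod_cast hL
    have hL1 : (0:ℝ) < L + 1 := by positivity
    have key : Real.log L + 1/(L+1) ≤ Real.log (L+1) := by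
      have h2 : Real.log ((L:ℝ)/(L+1)) ≤ (L:ℝ)/(L+1) - 1 :=
        Real.log_le_sub_one_of_pos (by positivity)
      rw [Real.log_div (ne_of_gt hL0) (ne_of_gt hL1)] at h2
      have h3 : (L:ℝ)/(L+1) - 1 = -(1/(L+1)) := by field_simp; ring
      linarith
    have hcast : ((L + 1 : ℕ) : ℝ) = (L:ℝ) + 1 := by push_cast; ring
    rw [hcast]
    linarith

section Prob
variable {Ω : Type*} [MeasurableSpace Ω] (P : Measure Ω) [IsProbabilityMeasure P]
  (X : ℕ → Ω → ℝ) (μ σ : ℝ)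

lemma aux_memLp_X (hσ : 0 < σ) (hmeas : ∀ k, Measurable (X k))
    (hmap : ∀ k, Measure.map (X k) P = gaussianReal μ ⟨σ^2, sq_nonneg σ⟩) (k : ℕ) :
    MemLp (X k) 2 P := by
  have hvσ : (⟨σ^2, sq_nonneg σ⟩ : ℝ≥0) ≠ 0 := by
    intro h
    exact (ne_of_gt (pow_pos hσ 2)) (congrArg NNReal.toReal h)
  have h := aux_memLp_id_gaussianReal μ hvσ
  rw [← hmap k] at h
  exact (memLp_map_measure_iff aestronglyMeasurable_id (hmeas k).aemeasurable).mp h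

lemma aux_Ksum_eq (v : ℕ) : Ksum X v = ∑ k ∈ Finset.range v, X k := by
  funext ω; simp [Ksum]

lemma aux_memLp_Ksum (hσ : 0 < σ) (hmeas : ∀ k, Measurable (X k))
    (hmap : ∀ k, Measure.map (X k) P = gaussianReal μ ⟨σ^2, sq_nonneg σ⟩) (v : ℕ) :
    MemLp (Ksum X v) 2 P := by
  rw [aux_Ksum_eq]
  exact memLp_finset_sum' _ fun k _ => aux_memLp_X P X μ σ hσ hmeas hmap k

lemma aux_memLp_mean (hσ : 0 < σ) (hmeas : ∀ k, Measurable (X k))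
    (hmap : ∀ k, Measure.map (X k) P = gaussianReal μ ⟨σ^2, sq_nonneg σ⟩) (v : ℕ) :
    MemLp (fun ω => Ksum X v ω / v - μ) 2 P := by
  have h1 := ((aux_memLp_Ksum P X μ σ hσ hmeas hmap v).const_mul ((v:ℝ)⁻¹)).sub
    (memLp_const (E := ℝ) μ)
  have he : (fun ω => Ksum X v ω / v - μ)
      = fun ω => (v:ℝ)⁻¹ * Ksum X v ω - (fun _ : Ω => μ) ω := by
    funext ω; rw [div_eq_inv_mul]
  rw [he]
  exact h1

lemma aux_integral_mean_sq (hσ : 0 < σ) (hmeas : ∀ k, Measurable (X k))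
    (hindep : iIndepFun X P)
    (hmap : ∀ k, Measure.map (X k) P = gaussianReal μ ⟨σ^2, sq_nonneg σ⟩)
    (v : ℕ) (hv : 1 ≤ v) :
    ∫ ω, (Ksum X v ω / v - μ)^2 ∂P = σ^2 / v := by
  have hvσ : (⟨σ^2, sq_nonneg σ⟩ : ℝ≥0) ≠ 0 := by
    intro h
    exact (ne_of_gt (pow_pos hσ 2)) (congrArg NNReal.toReal h)
  have hv0 : ((v:ℝ)) ≠ 0 := by
    have : (0:ℝ) < v := by exact_mod_cast hv
    exact ne_of_gt this
  have hXm : ∀ k, MemLp (X k) 2 P := aux_memLp_X P X μ σ hσ hmeas hmap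
  have hEX : ∀ k, ∫ ω, X k ω ∂P = μ := by
    intro k
    have h : ∫ y, y ∂(Measure.map (X k) P) = ∫ x, X k x ∂P :=
      integral_map (hmeas k).aemeasurable aestronglyMeasurable_id
    rw [hmap k] at h
    rw [← h, aux_integral_id_gaussianReal μ hvσ]
  have hE2 : ∀ k, ∫ ω, (X k ω - μ)^2 ∂P = σ^2 := by
    intro k
    have h : ∫ y, (y - μ)^2 ∂(Measure.map (X k) P) = ∫ x, (X k x - μ)^2 ∂P :=
      integral_map (hmeas k).aemeasurable
        (((measurable_id.sub_const μ).pow_const 2).aestronglyMeasurable)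
    rw [hmap k] at h
    rw [← h, aux_integral_sub_sq_gaussianReal μ hvσ]
    rfl
  have hvarX : ∀ k, variance (X k) P = σ^2 := by
    intro k
    rw [variance_eq_integral (hXm k).aemeasurable]
    have h6 : (X k - fun _ => ∫ ω, X k ω ∂P : Ω → ℝ) ^ 2 = fun ω => (X k ω - μ)^2 := by
      funext ω; simp [hEX k]
    rw [hEX k]
    exact hE2 k
  have hvarK : variance (Ksum X v) P = v * σ^2 := by
    rw [aux_Ksum_eq, IndepFun.variance_sum (fun k _ => hXm k)
      (fun i _ j _ hij => hindep.indepFun hij)]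
    simp [hvarX, Finset.sum_const, Finset.card_range, nsmul_eq_mul]
  have hEK : ∫ ω, Ksum X v ω ∂P = v * μ := by
    have h7 : ∫ ω, Ksum X v ω ∂P = ∑ k ∈ Finset.range v, ∫ ω, X k ω ∂P := by
      simp only [Ksum]
      exact integral_finset_sum _ (fun k _ => (hXm k).integrable one_le_two)
    rw [h7]
    simp [hEX, Finset.sum_const, Finset.card_range, nsmul_eq_mul]
  have hVarEq : ∫ ω, (Ksum X v ω - v*μ)^2 ∂P = v * σ^2 := by
    have h5 := variance_eq_integral (aux_memLp_Ksum P X μ σ hσ hmeas hmap v).aemeasurable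
    rw [hEK] at h5
    have h6 : (Ksum X v - fun _ => (v:ℝ)*μ) ^ 2 = fun ω => (Ksum X v ω - v*μ)^2 := by
      funext ω; simp
    rw [← h5, hvarK]
  have hveq : (fun ω => (Ksum X v ω / v - μ)^2)
      = fun ω => ((Ksum X v ω - v*μ)^2) / (v:ℝ)^2 := by
    funext ω
    have h8 : Ksum X v ω / v - μ = (Ksum X v ω - v*μ)/v := by field_simp
    rw [h8, div_pow]
  rw [hveq, integral_div, hVarEq]
  field_simp

end Prob

end AuxLemmas

/-- MSE and bias bounds for a trial with an interim analysis after every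
`mm` observations (`mᵢ = i·mm`, `n = (L+1)·mm`). -/
theorem stmt16 {Ω : Type*} [MeasurableSpace Ω] (P : Measure Ω) (X : ℕ → Ω → ℝ)
    (μ σ : ℝ) (ψ : ℕ → ℝ → ℝ) (L : ℕ) (m : Fin L → ℕ) (n : ℕ) (N : Ω → ℕ)
    (hGST : IsGST P X μ σ ψ L m n N) (mm : ℕ) (hmm : 1 ≤ mm)
    (hm : ∀ i : Fin L, m i = ((i : ℕ) + 1) * mm) (hn : n = (L + 1) * mm) :
    (∫ ω, (Ksum X (N ω) ω / (N ω : ℝ) - μ) ^ 2 ∂P ≤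
        σ ^ 2 / mm * (1 + ∑ i ∈ Finset.Icc 1 L, 1 / (i : ℝ))) ∧
    (σ ^ 2 / mm * (1 + ∑ i ∈ Finset.Icc 1 L, 1 / (i : ℝ)) ≤
        σ ^ 2 / mm * (2 + Real.log L)) ∧
    |∫ ω, (Ksum X (N ω) ω / (N ω : ℝ) - μ) ∂P| ≤
        σ * Real.sqrt ((2 + Real.log L) / mm) := by
  haveI : IsProbabilityMeasure P := hGST.isProb
  have hσ := hGST.sigma_pos
  have hσ2mm : (0:ℝ) ≤ σ^2 / mm := by positivity
  have hmm0 : (0:ℝ) < mm := by exact_mod_cast hmm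
  have hn1 : 1 ≤ n := by
    rw [hn]
    calc 1 = 1 * 1 := by norm_num
    _ ≤ (L+1) * mm := Nat.mul_le_mul (by omega) hmm
  set F : Finset ℕ := insert n (Finset.image m Finset.univ) with hF
  have hvF : ∀ v ∈ F, 1 ≤ v := by
    intro v hvmem
    rcases Finset.mem_insert.mp hvmem with rfl | hv
    · exact hn1
    · obtain ⟨i, _, rfl⟩ := Finset.mem_image.mp hv
      exact hGST.m_pos i
  have hmemF : ∀ ω, N ω ∈ F := by
    intro ω
    rcases hGST.range_N ω with h | ⟨i, h⟩
    · rw [h]; exact Finset.mem_insert_self _ _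
    · rw [h]; exact Finset.mem_insert_of_mem (Finset.mem_image_of_mem m (Finset.mem_univ i))
  have hind : ∀ v : ℕ, MeasurableSet {ω | N ω = v} :=
    fun v => hGST.meas_N (measurableSet_singleton v)
  have hgmem : ∀ v : ℕ, MemLp (fun ω => Ksum X v ω / v - μ) 2 P :=
    fun v => aux_memLp_mean P X μ σ hσ hGST.meas_X hGST.map_X v
  have hgsq : ∀ v : ℕ, Integrable (fun ω => (Ksum X v ω / (v:ℝ) - μ)^2) P :=
    fun v => (hgmem v).integrable_sq
  have hdec2 : (fun ω => (Ksum X (N ω) ω / (N ω : ℝ) - μ)^2)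
      = fun ω => ∑ v ∈ F, Set.indicator {ω' | N ω' = v}
          (fun ω' => (Ksum X v ω' / (v:ℝ) - μ)^2) ω := by
    funext ω
    symm
    calc ∑ v ∈ F, Set.indicator {ω' | N ω' = v}
          (fun ω' => (Ksum X v ω' / (v:ℝ) - μ)^2) ω
        = Set.indicator {ω' | N ω' = N ω}
            (fun ω' => (Ksum X (N ω) ω' / ((N ω):ℝ) - μ)^2) ω := by
          refine Finset.sum_eq_single_of_mem (N ω) (hmemF ω) ?_
          intro b _ hb
          exact Set.indicator_of_notMem
              (show ω ∉ {ω' | N ω' = b} from fun h => hb (Eq.symm h)) _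
      _ = (Ksum X (N ω) ω / ((N ω):ℝ) - μ)^2 := Set.indicator_of_mem (show ω ∈ {ω' | N ω' = N ω} from rfl) _
  have hintind : ∀ v ∈ F, Integrable (Set.indicator {ω' | N ω' = v}
      (fun ω' => (Ksum X v ω' / (v:ℝ) - μ)^2)) P :=
    fun v _ => (hgsq v).indicator (hind v)
  have hMSE : ∫ ω, (Ksum X (N ω) ω / (N ω : ℝ) - μ)^2 ∂P
      ≤ σ^2 / mm * (1 + ∑ i ∈ Finset.Icc 1 L, 1/(i:ℝ)) := by
    rw [hdec2, integral_finset_sum F hintind]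
    have hterm : ∀ v ∈ F, (∫ ω, Set.indicator {ω' | N ω' = v}
        (fun ω' => (Ksum X v ω' / (v:ℝ) - μ)^2) ω ∂P) ≤ σ^2 / v := by
      intro v hvmem
      rw [integral_indicator (hind v)]
      calc ∫ ω in {ω' | N ω' = v}, (Ksum X v ω / (v:ℝ) - μ)^2 ∂P
          ≤ ∫ ω, (Ksum X v ω / (v:ℝ) - μ)^2 ∂P :=
            setIntegral_le_integral (hgsq v) (ae_of_all _ fun ω => sq_nonneg _)
        _ = σ^2 / v := aux_integral_mean_sq P X μ σ hσ hGST.meas_X hGST.indep_X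
            hGST.map_X v (hvF v hvmem)
    calc ∑ v ∈ F, ∫ ω, Set.indicator {ω' | N ω' = v}
          (fun ω' => (Ksum X v ω' / (v:ℝ) - μ)^2) ω ∂P
        ≤ ∑ v ∈ F, σ^2/(v:ℝ) := Finset.sum_le_sum hterm
      _ ≤ σ^2/mm * (1 + ∑ i ∈ Finset.Icc 1 L, 1/(i:ℝ)) := by
          have hnotmem : n ∉ Finset.image m Finset.univ := by
            simp only [Finset.mem_image, Finset.mem_univ, true_and, not_exists]
            exact fun i h => absurd h (ne_of_lt (hGST.m_lt_n i))
          rw [hF, Finset.sum_insert hnotmem,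
            Finset.sum_image (fun i _ j _ h => hGST.m_mono.injective h)]
          have hmn : (mm:ℝ) ≤ (n:ℝ) := by
            have : mm ≤ n := by
              rw [hn]; exact Nat.le_mul_of_pos_left mm (Nat.succ_pos L)
            exact_mod_cast this
          have h1 : σ^2/(n:ℝ) ≤ σ^2/(mm:ℝ) := by gcongr
          have h2 : (∑ i : Fin L, σ^2/((m i : ℕ):ℝ))
              = σ^2/mm * ∑ i ∈ Finset.Icc 1 L, 1/(i:ℝ) := by
            simp_rw [hm]
            rw [Fin.sum_univ_eq_sum_range (fun i => σ^2 / (((i+1)*mm : ℕ):ℝ)) L,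
              Finset.mul_sum,
              show Finset.Icc 1 L = Finset.Ico 1 (L+1) from (Finset.Ico_add_one_right_eq_Icc 1 L).symm,
              Finset.sum_Ico_eq_sum_range]
            simp only [Nat.add_sub_cancel]
            apply Finset.sum_congr rfl
            intro i _
            have hx : (0:ℝ) < (i:ℝ) + 1 := by positivity
            push_cast
            field_simp
            ring
          rw [h2]
          have hH0 : (0:ℝ) ≤ σ^2/mm * ∑ i ∈ Finset.Icc 1 L, 1/(i:ℝ) := by
            apply mul_nonneg hσ2mm
            apply Finset.sum_nonneg
            intro i _
            positivity
          have : σ^2/(mm:ℝ) * (1 + ∑ i ∈ Finset.Icc 1 L, 1/(i:ℝ))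
              = σ^2/(mm:ℝ) + σ^2/mm * ∑ i ∈ Finset.Icc 1 L, 1/(i:ℝ) := by ring
          rw [this]
          linarith
  have hH : ∑ i ∈ Finset.Icc 1 L, 1/(i:ℝ) ≤ 1 + Real.log L := aux_harmonic L hGST.L_pos
  have hpart2 : σ^2/mm * (1 + ∑ i ∈ Finset.Icc 1 L, 1/(i:ℝ))
      ≤ σ^2/mm * (2 + Real.log L) := by
    apply mul_le_mul_of_nonneg_left (by linarith) hσ2mm
  refine ⟨hMSE, hpart2, ?_⟩
  have hfmem : MemLp (fun ω => Ksum X (N ω) ω / (N ω : ℝ) - μ) 2 P := by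
    have hdec1 : (fun ω => Ksum X (N ω) ω / (N ω : ℝ) - μ)
        = ∑ v ∈ F, Set.indicator {ω' | N ω' = v}
            (fun ω' => Ksum X v ω' / (v:ℝ) - μ) := by
      funext ω
      rw [Finset.sum_apply]
      symm
      calc ∑ v ∈ F, Set.indicator {ω' | N ω' = v}
            (fun ω' => Ksum X v ω' / (v:ℝ) - μ) ω
          = Set.indicator {ω' | N ω' = N ω}
              (fun ω' => Ksum X (N ω) ω' / ((N ω):ℝ) - μ) ω := by
            refine Finset.sum_eq_single_of_mem (N ω) (hmemF ω) ?_
            intro b _ hb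
            exact Set.indicator_of_notMem
              (show ω ∉ {ω' | N ω' = b} from fun h => hb (Eq.symm h)) _
        _ = Ksum X (N ω) ω / ((N ω):ℝ) - μ := Set.indicator_of_mem (show ω ∈ {ω' | N ω' = N ω} from rfl) _
    rw [hdec1]
    exact memLp_finset_sum' _ fun v _ => ((hgmem v).indicator (hind v))
  have hvar := variance_nonneg (fun ω => Ksum X (N ω) ω / (N ω : ℝ) - μ) P
  rw [variance_eq_sub hfmem] at hvar
  have hpow : ((fun ω => Ksum X (N ω) ω / (N ω : ℝ) - μ) ^ 2)
      = fun ω => (Ksum X (N ω) ω / (N ω : ℝ) - μ)^2 := by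
    funext ω; simp [Pi.pow_apply]
  rw [hpow] at hvar
  have hsq : (∫ ω, (Ksum X (N ω) ω / (N ω : ℝ) - μ) ∂P)^2
      ≤ ∫ ω, (Ksum X (N ω) ω / (N ω : ℝ) - μ)^2 ∂P := by linarith
  have hchain : ∫ ω, (Ksum X (N ω) ω / (N ω : ℝ) - μ)^2 ∂P
      ≤ σ^2/mm * (2 + Real.log L) := le_trans hMSE hpart2
  calc |∫ ω, (Ksum X (N ω) ω / (N ω : ℝ) - μ) ∂P|
      = Real.sqrt ((∫ ω, (Ksum X (N ω) ω / (N ω : ℝ) - μ) ∂P)^2) :=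
        (Real.sqrt_sq_eq_abs _).symm
    _ ≤ Real.sqrt (σ^2/mm * (2 + Real.log L)) :=
        Real.sqrt_le_sqrt (le_trans hsq hchain)
    _ = σ * Real.sqrt ((2 + Real.log L)/mm) := by
        rw [show σ^2/(mm:ℝ) * (2 + Real.log L) = σ^2 * ((2 + Real.log L)/(mm:ℝ)) by ring,
          Real.sqrt_mul (sq_nonneg σ), Real.sqrt_sq hσ.le]

end
end
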